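/- arXiv:2603.02400 — 2 statements merged into one kernel-verified Lean document; each statement's English description precedes it below -/
import Mathlib

section
/- Let T be a bidirected tree rooted at a vertex z, and let r and r' be two unimodal requests in T. Then r and r' do not interfere if and only if m_r = m_{r'}, s_r and t_{r'} are related, and s_{r'} and t_r are related. -/
/-!
Being an ancestor is a partial order on the vertices of a rooted tree, the ancestors of a vertex
form a chain, and every vertex other than the root has a unique parent. A path therefore never
steps down and then up, since the vertex in between would have two parents. Consequently a
unimodal request starts with the arc from `s_r` to its parent and ends with the arc from the
parent of `t_r`, and the tree path from `s_r` to `t_{r'}` begins and ends that way exactly when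
`s_r` and `t_{r'}` are unrelated: this is when `r` interferes on `r'`. Finally the middle of a
unimodal request is the lowest common ancestor of its (unrelated) endpoints, and if `s_r ~ t_{r'}`
and `s_{r'} ~ t_r` then comparing ancestors along chains shows that each middle is a common
ancestor of the other request's endpoints, so the two middles coincide.
-/

open SimpleGraph

/-- A request in a bidirected tree `T`: a directed path of length at least 1,
encoded as a path (walk without vertex repetition) in the underlying tree. -/
structure Request {V : Type*} (T : SimpleGraph V) where
  s : V
  t : V
  toWalk : T.Walk s t
  isPath : toWalk.IsPath
  one_le_length : 1 ≤ toWalk.length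

namespace Request

variable {V : Type*} {T : SimpleGraph V}

/-- The second vertex `s_r⁺` of a request. -/
def sPlus (r : Request T) : V := r.toWalk.getVert 1

/-- The penultimate vertex `t_r⁻` of a request. -/
def tMinus (r : Request T) : V := r.toWalk.getVert (r.toWalk.length - 1)

end Request

variable {V : Type*}

/-- `r` interferes on `r'` if the unique path from `s_r` to `t_{r'}` in the tree `T`
has first arc the emission arc of `r` and last arc the reception arc of `r'`. -/
def InterferesOn (T : SimpleGraph V) (r r' : Request T) : Prop :=
  ∃ p : T.Walk r.s r'.t, p.IsPath ∧ 1 ≤ p.length ∧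
    p.getVert 1 = r.sPlus ∧ p.getVert (p.length - 1) = r'.tMinus

/-- Two requests interfere if one of them interferes on the other. -/
def Interfere (T : SimpleGraph V) (r r' : Request T) : Prop :=
  InterferesOn T r r' ∨ InterferesOn T r' r

/-- `x` is an ancestor of `y` in the tree `T` rooted at `z`:
`x` lies on the unique path from `z` to `y`. -/
def Ancestor (T : SimpleGraph V) (z x y : V) : Prop :=
  ∃ p : T.Walk z y, p.IsPath ∧ x ∈ p.support

/-- Two vertices are related if one is an ancestor of the other. -/
def Related (T : SimpleGraph V) (z x y : V) : Prop :=
  Ancestor T z x y ∨ Ancestor T z y x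

/-- A request is converging (w.r.t. root `z`) if all its arcs are directed towards `z`,
i.e. the head of every arc is an ancestor of its tail. -/
def Converging (T : SimpleGraph V) (z : V) (r : Request T) : Prop :=
  ∀ i < r.toWalk.length, Ancestor T z (r.toWalk.getVert (i+1)) (r.toWalk.getVert i)

/-- A request is diverging (w.r.t. root `z`) if all its arcs are directed away from `z`,
i.e. the tail of every arc is an ancestor of its head. -/
def Diverging (T : SimpleGraph V) (z : V) (r : Request T) : Prop :=
  ∀ i < r.toWalk.length, Ancestor T z (r.toWalk.getVert i) (r.toWalk.getVert (i+1))

/-- A request is unimodal (w.r.t. root `z`) if it is neither converging nor diverging. -/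
def Unimodal (T : SimpleGraph V) (z : V) (r : Request T) : Prop :=
  ¬ Converging T z r ∧ ¬ Diverging T z r

/-- `m` is the middle of the request `r` (w.r.t. root `z`): the vertex of `r`
closest to the root, i.e. the vertex of `r` which is an ancestor of every vertex of `r`. -/
def IsMiddle (T : SimpleGraph V) (z : V) (r : Request T) (m : V) : Prop :=
  m ∈ r.toWalk.support ∧ ∀ y ∈ r.toWalk.support, Ancestor T z m y

/-- The interference graph of a family of requests: two (indices of) requests are
adjacent iff they are distinct and the requests interfere. -/
def interferenceGraph (T : SimpleGraph V) {ι : Type*} (f : ι → Request T) :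
    SimpleGraph ι where
  Adj i j := i ≠ j ∧ Interfere T (f i) (f j)
  symm := by
    constructor
    intro i j h
    exact ⟨h.1.symm, h.2.symm⟩
  loopless := by
    constructor
    intro i h
    exact h.1 rfl

/-- The interference graph of a set of requests. -/
def interGraph (T : SimpleGraph V) (R : Set (Request T)) : SimpleGraph ↥R :=
  interferenceGraph T (fun r => (r : Request T))

/-- The pair `(a, b)` is an arc joining two consecutive vertices of the
bidirected path corresponding to the walk `p` (in either direction). -/
def ArcOn (T : SimpleGraph V) {u v : V} (p : T.Walk u v) (a b : V) : Prop :=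
  ∃ j < p.length, (p.getVert j = a ∧ p.getVert (j+1) = b) ∨
    (p.getVert j = b ∧ p.getVert (j+1) = a)

/-- The request `r` shares an arc with the bidirected path corresponding to
the walk `p`. -/
def SharesArc (T : SimpleGraph V) {u v : V} (p : T.Walk u v) (r : Request T) : Prop :=
  ∃ i < r.toWalk.length, ArcOn T p (r.toWalk.getVert i) (r.toWalk.getVert (i+1))

/-- A leaf of a tree: a vertex with at most one neighbour. -/
def IsLeaf (T : SimpleGraph V) (y : V) : Prop :=
  {w | T.Adj y w}.Subsingleton

/-- A comparability graph: there is a partial order on the vertices such that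
two distinct vertices are adjacent iff they are comparable. -/
def IsComparabilityGraph {α : Type*} (G : SimpleGraph α) : Prop :=
  ∃ le : α → α → Prop, IsPartialOrder α le ∧ ∀ a b, G.Adj a b ↔ a ≠ b ∧ (le a b ∨ le b a)

/-- A cobipartite graph: the vertex set can be partitioned into two cliques. -/
def IsCobipartite {α : Type*} (G : SimpleGraph α) : Prop :=
  ∃ A : Set α, G.IsClique A ∧ G.IsClique Aᶜ

namespace SimpleGraph.IsAcyclic

theorem eq_of_isPath {G : SimpleGraph V} (hG : G.IsAcyclic) {u v : V} {p q : G.Walk u v}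
    (hp : p.IsPath) (hq : q.IsPath) : p = q :=
  congrArg Subtype.val ((hG.subsingleton_path u v).elim ⟨p, hp⟩ ⟨q, hq⟩)

end SimpleGraph.IsAcyclic

open Walk

section RootedTree

variable {T : SimpleGraph V} {z u v w x x' y : V}

theorem ancestor_iff_mem_support (hT : T.IsAcyclic) {p : T.Walk z y} (hp : p.IsPath) :
    Ancestor T z x y ↔ x ∈ p.support :=
  ⟨fun ⟨_, hq, hx⟩ => hT.eq_of_isPath hq hp ▸ hx, fun hx => ⟨p, hp, hx⟩⟩

theorem ancestor_refl (hT : T.Connected) (y : V) : Ancestor T z y y :=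
  have ⟨p, hp⟩ := hT.exists_isPath z y
  ⟨p, hp, p.end_mem_support⟩

theorem Related.symm (h : Related T z x y) : Related T z y x :=
  Or.symm h

theorem ancestor_of_mem_support_of_isPath_append {p : T.Walk z x} {q : T.Walk x y}
    (hpq : (p.append q).IsPath) (hw : w ∈ q.support) : Ancestor T z x w := by
  classical
  rw [← q.take_spec hw, append_assoc] at hpq
  exact ⟨_, hpq.of_append_left, (mem_support_append_iff _ _).mpr (Or.inl p.end_mem_support)⟩

theorem Ancestor.trans (hT : T.IsAcyclic) (hxy : Ancestor T z x y) (hyw : Ancestor T z y w) :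
    Ancestor T z x w := by
  obtain ⟨p, hp, hy⟩ := hyw
  obtain ⟨p₀, _, hp₀, -, rfl⟩ := hp.mem_support_iff_exists_append.mp hy
  exact ⟨_, hp, (mem_support_append_iff _ _).mpr
    (Or.inl ((ancestor_iff_mem_support hT hp₀).mp hxy))⟩

theorem Ancestor.antisymm (hT : T.IsAcyclic) (hxy : Ancestor T z x y) (hyx : Ancestor T z y x) :
    x = y := by
  obtain ⟨p, hp, hx⟩ := hxy
  obtain ⟨p₀, p₁, hp₀, -, rfl⟩ := hp.mem_support_iff_exists_append.mp hx
  by_contra hne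
  exact hp.ne_of_mem_support_of_append (Ne.symm hne)
    ((ancestor_iff_mem_support hT hp₀).mp hyx) p₁.end_mem_support rfl

theorem related_of_ancestor (hT : T.IsAcyclic) (hx : Ancestor T z x y)
    (hx' : Ancestor T z x' y) : Related T z x x' := by
  obtain ⟨p, hp, hxp⟩ := hx
  obtain ⟨p₀, _, hp₀, -, rfl⟩ := hp.mem_support_iff_exists_append.mp hxp
  rcases (mem_support_append_iff _ _).mp ((ancestor_iff_mem_support hT hp).mp hx') with h | h
  · exact Or.inr ((ancestor_iff_mem_support hT hp₀).mpr h)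
  · exact Or.inl (ancestor_of_mem_support_of_isPath_append hp h)

theorem related_of_adj (hT : T.Connected) (h : T.Adj x y) : Related T z x y := by
  obtain ⟨q, hq⟩ := hT.exists_isPath z x
  by_cases hy : y ∈ q.support
  · exact Or.inr ⟨q, hq, hy⟩
  · exact Or.inl ⟨q.concat h, hq.concat hy h, q.support_subset_support_concat h q.end_mem_support⟩

theorem ancestor_of_mem_support_of_isPath (hT : T.IsAcyclic) (hu : Ancestor T z x u)
    (hv : Ancestor T z x v) {p : T.Walk u v} (hp : p.IsPath) (hw : w ∈ p.support) :
    Ancestor T z x w := by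
  classical
  obtain ⟨P, hP, hxP⟩ := hu
  obtain ⟨_, q, -, -, rfl⟩ := hP.mem_support_iff_exists_append.mp hxP
  obtain ⟨P', hP', hxP'⟩ := hv
  obtain ⟨_, q', -, -, rfl⟩ := hP'.mem_support_iff_exists_append.mp hxP'
  -- `p` is the unique path, so it is the bypass of the walk from `u` up to `x` and down to `v`
  rw [hT.eq_of_isPath hp (q.reverse.append q').bypass_isPath] at hw
  rcases (mem_support_append_iff _ _).mp (support_bypass_subset_support _ hw) with h | h
  · exact ancestor_of_mem_support_of_isPath_append hP (by simpa using h)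
  · exact ancestor_of_mem_support_of_isPath_append hP' h

def IsParent (T : SimpleGraph V) (z x y : V) : Prop :=
  T.Adj x y ∧ Ancestor T z x y

theorem IsParent.eq_penultimate (hT : T.IsAcyclic) (hx : IsParent T z x y) {p : T.Walk z y}
    (hp : p.IsPath) : x = p.penultimate :=
  hT.eq_penultimate_of_adj_end hp hx.1.symm ((ancestor_iff_mem_support hT hp).mp hx.2)

theorem IsParent.unique (hT : T.IsAcyclic) (hx : IsParent T z x y) (hx' : IsParent T z x' y) :
    x = x' := by
  obtain ⟨p, hp, -⟩ := hx.2
  rw [hx.eq_penultimate hT hp, hx'.eq_penultimate hT hp]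


section Paths

variable {p : T.Walk u v} {i j : ℕ}

theorem ancestor_getVert_add_two (hT : T.IsTree) (hp : p.IsPath) (hi : i + 1 < p.length)
    (hdown : Ancestor T z (p.getVert i) (p.getVert (i + 1))) :
    Ancestor T z (p.getVert (i + 1)) (p.getVert (i + 2)) := by
  refine (related_of_adj hT.connected (p.adj_getVert_succ hi)).resolve_right fun hup => ?_
  -- otherwise `p.getVert (i + 1)` would have the two parents `p.getVert i` and `p.getVert (i + 2)`
  have h := IsParent.unique hT.isAcyclic ⟨p.adj_getVert_succ (by omega), hdown⟩
    ⟨(p.adj_getVert_succ hi).symm, hup⟩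
  have := hp.getVert_injOn (by simp; omega) (by simp; omega) h
  omega

theorem ancestor_getVert_succ_of_le (hT : T.IsTree) (hp : p.IsPath)
    (hdown : Ancestor T z (p.getVert i) (p.getVert (i + 1))) (hij : i ≤ j) (hj : j < p.length) :
    Ancestor T z (p.getVert j) (p.getVert (j + 1)) := by
  induction j, hij using Nat.le_induction with
  | base => exact hdown
  | succ j _ ih => exact ancestor_getVert_add_two hT hp hj (ih (by omega))

theorem ancestor_getVert_of_le (hT : T.IsTree) (hp : p.IsPath)
    (hdown : Ancestor T z (p.getVert i) (p.getVert (i + 1))) (hij : i ≤ j) (hj : j ≤ p.length) :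
    Ancestor T z (p.getVert i) (p.getVert j) := by
  induction j, hij using Nat.le_induction with
  | base => exact ancestor_refl hT.connected _
  | succ j hij ih =>
    exact (ih (by omega)).trans hT.isAcyclic (ancestor_getVert_succ_of_le hT hp hdown hij hj)

theorem IsParent.snd_eq_iff (hT : T.IsTree) (hx : IsParent T z x u) (hp : p.IsPath) :
    p.snd = x ↔ ¬ Ancestor T z u v := by
  constructor
  · intro hsnd huv
    have hu := ancestor_of_mem_support_of_isPath hT.isAcyclic (ancestor_refl hT.connected u) huv
      hp (p.getVert_mem_support 1)
    exact hx.1.ne (hx.2.antisymm hT.isAcyclic (hsnd ▸ hu))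
  · intro huv
    have hadj : T.Adj u p.snd :=
      p.adj_snd (not_nil_of_ne fun h => huv (h ▸ ancestor_refl hT.connected u))
    refine IsParent.unique hT.isAcyclic ⟨hadj.symm, ?_⟩ hx
    refine (related_of_adj hT.connected hadj).resolve_left fun hdown => huv ?_
    simpa using ancestor_getVert_of_le hT hp (i := 0) (by simpa using hdown) (Nat.zero_le _) le_rfl

theorem IsParent.penultimate_eq_iff (hT : T.IsTree) (hy : IsParent T z y v) (hp : p.IsPath) :
    p.penultimate = y ↔ ¬ Ancestor T z v u := by
  rw [← snd_reverse]
  exact hy.snd_eq_iff hT hp.reverse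

end Paths

end RootedTree

section Requests

variable {T : SimpleGraph V} {z m m' : V} {r r' : Request T}

theorem Unimodal.isParent_sPlus (hT : T.IsTree) (hr : Unimodal T z r) :
    IsParent T z r.sPlus r.s := by
  have hadj : T.Adj r.s r.sPlus := r.toWalk.adj_snd (not_nil_iff_lt_length.mpr r.one_le_length)
  refine ⟨hadj.symm, (related_of_adj hT.connected hadj).resolve_left fun hdown => hr.2 ?_⟩
  exact fun i hi => ancestor_getVert_succ_of_le hT r.isPath (by simpa [Request.sPlus] using hdown)
    (Nat.zero_le i) hi

theorem Unimodal.isParent_tMinus (hT : T.IsTree) (hr : Unimodal T z r) :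
    IsParent T z r.tMinus r.t := by
  have hn := r.one_le_length
  have hadj : T.Adj r.tMinus r.t := r.toWalk.adj_penultimate (not_nil_iff_lt_length.mpr hn)
  refine ⟨hadj, (related_of_adj hT.connected hadj).resolve_right fun hup => hr.1 fun i hi => ?_⟩
  refine (related_of_adj hT.connected (r.toWalk.adj_getVert_succ hi)).resolve_left fun hdown => ?_
  have hlast := ancestor_getVert_succ_of_le hT r.isPath hdown (j := r.toWalk.length - 1)
    (by omega) (by omega)
  rw [Nat.sub_add_cancel hn, getVert_length] at hlast
  exact hadj.ne (hlast.antisymm hT.isAcyclic hup)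

theorem Unimodal.not_related (hT : T.IsTree) (hr : Unimodal T z r) : ¬ Related T z r.s r.t := by
  rintro (h | h)
  · exact ((hr.isParent_sPlus hT).snd_eq_iff hT r.isPath).mp rfl h
  · exact ((hr.isParent_tMinus hT).penultimate_eq_iff hT r.isPath).mp rfl h

theorem interferesOn_iff (hT : T.IsTree) (hs : IsParent T z r.sPlus r.s)
    (ht : IsParent T z r'.tMinus r'.t) : InterferesOn T r r' ↔ ¬ Related T z r.s r'.t := by
  constructor
  · rintro ⟨p, hp, -, h1, h2⟩ (h | h)
    · exact (hs.snd_eq_iff hT hp).mp h1 h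
    · exact (ht.penultimate_eq_iff hT hp).mp h2 h
  · intro hrel
    rw [Related, not_or] at hrel
    obtain ⟨p, hp⟩ := hT.connected.exists_isPath r.s r'.t
    refine ⟨p, hp, ?_, (hs.snd_eq_iff hT hp).mpr hrel.1, (ht.penultimate_eq_iff hT hp).mpr hrel.2⟩
    exact Nat.one_le_iff_ne_zero.mpr fun h0 =>
      hrel.1 (eq_of_length_eq_zero h0 ▸ ancestor_refl hT.connected _)

theorem IsMiddle.ancestor_of_ancestor (hT : T.IsAcyclic) (hm : IsMiddle T z r m)
    (hs : Ancestor T z x r.s) (ht : Ancestor T z x r.t) : Ancestor T z x m :=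
  ancestor_of_mem_support_of_isPath hT hs ht r.isPath hm.1

theorem ancestor_of_related_of_related (hT : T.IsAcyclic) {s t s' t' : V}
    (hs : Ancestor T z m s) (ht : Ancestor T z m t) (hst' : Related T z s t')
    (hs't : Related T z s' t) (hs't' : ¬ Related T z s' t') : Ancestor T z m t' := by
  rcases hst' with hst' | ht's
  · exact hs.trans hT hst'
  rcases related_of_ancestor hT hs ht's with hmt' | ht'm
  · exact hmt'
  have ht't := ht'm.trans hT ht
  rcases hs't with hs't | hts'
  · exact absurd (related_of_ancestor hT hs't ht't) hs't'
  · exact absurd (Or.inr (ht't.trans hT hts')) hs't'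

theorem IsMiddle.ancestor_of_related (hT : T.IsAcyclic) (hm : IsMiddle T z r m)
    (hm' : IsMiddle T z r' m') (hr' : ¬ Related T z r'.s r'.t) (h1 : Related T z r.s r'.t)
    (h2 : Related T z r'.s r.t) : Ancestor T z m m' := by
  have hms := hm.2 _ r.toWalk.start_mem_support
  have hmt := hm.2 _ r.toWalk.end_mem_support
  exact hm'.ancestor_of_ancestor hT
    (ancestor_of_related_of_related hT hmt hms h2.symm h1.symm fun h => hr' h.symm)
    (ancestor_of_related_of_related hT hms hmt h1 h2 hr')

end Requests

/-- Lemma 1(iv): two unimodal requests do not interfere iff they have the same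
middle, `s_r` and `t_{r'}` are related, and `s_{r'}` and `t_r` are related. -/
theorem unimodal_not_interfere_iff {V : Type*} (T : SimpleGraph V) (hT : T.IsTree)
    (z : V) (r r' : Request T) (m m' : V)
    (hr : Unimodal T z r) (hr' : Unimodal T z r')
    (hm : IsMiddle T z r m) (hm' : IsMiddle T z r' m') :
    ¬ Interfere T r r' ↔
      m = m' ∧ Related T z r.s r'.t ∧ Related T z r'.s r.t := by
  rw [Interfere, not_or, interferesOn_iff hT (hr.isParent_sPlus hT) (hr'.isParent_tMinus hT),
    interferesOn_iff hT (hr'.isParent_sPlus hT) (hr.isParent_tMinus hT), not_not, not_not]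
  refine ⟨fun ⟨h1, h2⟩ => ⟨?_, h1, h2⟩, fun h => h.2⟩
  exact (hm.ancestor_of_related hT.isAcyclic hm' (hr'.not_related hT) h1 h2).antisymm
    hT.isAcyclic (hm'.ancestor_of_related hT.isAcyclic hm (hr.not_related hT) h2 h1)
end

section
/- Let R be a set of requests on a bidirected tree T rooted at a vertex z, and let R^- and R^+ be the sets of converging and diverging requests of R. Then the interference graph I(R^-,T) is a comparability graph, and the interference graph I(R^+,T) is a comparability graph. -/
/-!
Rooting `T` at `z` makes "is an ancestor of" a partial order on the vertices. A path whose
first and last arcs both point towards the root points towards the root throughout, so a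
converging request `r` interferes on a converging request `r'` exactly when `t_{r'}⁻` is an
ancestor of `s_r`. As `t_r⁻` is an ancestor of `s_r` as well, two converging requests
interfere iff their vertices `t⁻` are comparable; ordering the requests by `t⁻`, with ties
broken arbitrarily, exhibits the comparability graph. Reversing every request exchanges
converging and diverging requests and preserves interference, which settles diverging
requests, now ordered by `s⁺`.
-/

open SimpleGraph

variable {V : Type*}

open Walk

variable {T : SimpleGraph V}

namespace SimpleGraph.IsTree

noncomputable def rootPath (hT : T.IsTree) (z v : V) : T.Walk z v :=
  (hT.existsUnique_path z v).choose

noncomputable def depth (hT : T.IsTree) (z v : V) : ℕ :=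
  (hT.rootPath z v).length

theorem isPath_rootPath (hT : T.IsTree) (z v : V) : (hT.rootPath z v).IsPath :=
  (hT.existsUnique_path z v).choose_spec.1

theorem eq_rootPath (hT : T.IsTree) {z v : V} {p : T.Walk z v} (hp : p.IsPath) :
    p = hT.rootPath z v :=
  (hT.existsUnique_path z v).unique hp (hT.isPath_rootPath z v)

theorem ancestor_iff (hT : T.IsTree) {z x y : V} :
    Ancestor T z x y ↔ x ∈ (hT.rootPath z y).support :=
  ⟨fun ⟨_, hp, hx⟩ => hT.eq_rootPath hp ▸ hx, fun h => ⟨_, hT.isPath_rootPath z y, h⟩⟩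

theorem rootPath_getVert (hT : T.IsTree) (z y : V) (i : ℕ) :
    hT.rootPath z ((hT.rootPath z y).getVert i) = (hT.rootPath z y).take i :=
  (hT.eq_rootPath ((hT.isPath_rootPath z y).take i)).symm

theorem depth_getVert (hT : T.IsTree) (z y : V) {i : ℕ} (hi : i ≤ hT.depth z y) :
    hT.depth z ((hT.rootPath z y).getVert i) = i := by
  rw [depth, rootPath_getVert, take_length]
  exact min_eq_left hi

theorem ancestor_getVert_getVert (hT : T.IsTree) (z y : V) {i j : ℕ} (hij : i ≤ j) :
    Ancestor T z ((hT.rootPath z y).getVert i) ((hT.rootPath z y).getVert j) := by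
  rw [hT.ancestor_iff, rootPath_getVert, ← min_eq_right hij, ← take_getVert]
  exact getVert_mem_support _ _

theorem ancestor_iff_depth (hT : T.IsTree) {z x y : V} :
    Ancestor T z x y ↔
      hT.depth z x ≤ hT.depth z y ∧ (hT.rootPath z y).getVert (hT.depth z x) = x := by
  constructor
  · intro h
    obtain ⟨i, rfl, hi⟩ := mem_support_iff_exists_getVert.1 (hT.ancestor_iff.1 h)
    rw [hT.depth_getVert z y hi]
    exact ⟨hi, rfl⟩
  · rintro ⟨hle, hx⟩
    have h := hT.ancestor_getVert_getVert z y hle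
    rwa [hx, depth, getVert_length] at h

theorem ancestor_refl (hT : T.IsTree) (z x : V) : Ancestor T z x x :=
  hT.ancestor_iff.2 (end_mem_support _)

theorem ancestor_trans (hT : T.IsTree) {z x y w : V} (hxy : Ancestor T z x y)
    (hyw : Ancestor T z y w) : Ancestor T z x w := by
  obtain ⟨j, rfl, -⟩ := mem_support_iff_exists_getVert.1 (hT.ancestor_iff.1 hyw)
  rw [hT.ancestor_iff, rootPath_getVert, support_take] at hxy
  exact hT.ancestor_iff.2 (List.mem_of_mem_take hxy)

theorem ancestor_antisymm (hT : T.IsTree) {z x y : V} (hxy : Ancestor T z x y)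
    (hyx : Ancestor T z y x) : x = y := by
  obtain ⟨hle, hx⟩ := hT.ancestor_iff_depth.1 hxy
  rw [← hx, le_antisymm hle (hT.ancestor_iff_depth.1 hyx).1]
  exact getVert_length _

theorem isPartialOrder_ancestor (hT : T.IsTree) (z : V) : IsPartialOrder V (Ancestor T z) where
  refl := hT.ancestor_refl z
  trans _ _ _ := hT.ancestor_trans
  antisymm _ _ := hT.ancestor_antisymm

theorem related_of_ancestor_of_ancestor (hT : T.IsTree) {z x y a : V}
    (hx : Ancestor T z x a) (hy : Ancestor T z y a) : Related T z x y := by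
  obtain ⟨i, rfl, -⟩ := mem_support_iff_exists_getVert.1 (hT.ancestor_iff.1 hx)
  obtain ⟨j, rfl, -⟩ := mem_support_iff_exists_getVert.1 (hT.ancestor_iff.1 hy)
  rcases le_total i j with hij | hji
  · exact Or.inl (hT.ancestor_getVert_getVert z a hij)
  · exact Or.inr (hT.ancestor_getVert_getVert z a hji)

theorem rootPath_eq_concat (hT : T.IsTree) {z a c : V} (h : T.Adj a c)
    (hc : c ∉ (hT.rootPath z a).support) : hT.rootPath z c = (hT.rootPath z a).concat h :=
  (hT.eq_rootPath ((hT.isPath_rootPath z a).concat hc h)).symm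

theorem ancestor_or_ancestor_of_adj (hT : T.IsTree) (z : V) {a c : V} (h : T.Adj a c) :
    Ancestor T z a c ∨ Ancestor T z c a := by
  by_cases hc : c ∈ (hT.rootPath z a).support
  · exact Or.inr (hT.ancestor_iff.2 hc)
  · left
    rw [hT.ancestor_iff, hT.rootPath_eq_concat h hc, support_concat]
    exact List.mem_append_left _ (end_mem_support _)

theorem rootPath_eq_concat_of_ancestor (hT : T.IsTree) {z a c : V} (h : T.Adj a c)
    (hac : Ancestor T z a c) : hT.rootPath z c = (hT.rootPath z a).concat h :=
  hT.rootPath_eq_concat h fun hc => h.ne (hT.ancestor_antisymm hac (hT.ancestor_iff.2 hc))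

theorem depth_eq_succ_of_ancestor (hT : T.IsTree) {z a c : V} (h : T.Adj a c)
    (hac : Ancestor T z a c) : hT.depth z c = hT.depth z a + 1 := by
  rw [depth, hT.rootPath_eq_concat_of_ancestor h hac, length_concat, depth]

theorem penultimate_rootPath (hT : T.IsTree) {z a c : V} (h : T.Adj a c)
    (hac : Ancestor T z a c) : (hT.rootPath z c).penultimate = a := by
  rw [hT.rootPath_eq_concat_of_ancestor h hac, penultimate_concat]

theorem ancestor_of_isPath_of_parent_notMem (hT : T.IsTree) {z x a c : V} (q : T.Walk a c)
    (hq : q.IsPath) (hx : x ∉ q.support) (hxc : T.Adj x c) (hanc : Ancestor T z x c) :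
    Ancestor T z c a := by
  induction q with
  | nil => exact hT.ancestor_refl z _
  | @cons u b c hub q ih =>
    rw [support_cons, List.mem_cons, not_or] at hx
    have hcb : Ancestor T z c b := ih hq.of_cons hx.2 hxc hanc
    rcases hT.ancestor_or_ancestor_of_adj z hub with hu | hb
    · rw [hT.ancestor_iff, hT.rootPath_eq_concat_of_ancestor hub hu, support_concat,
        List.mem_append, List.mem_singleton] at hcb
      rcases hcb with hcu | rfl
      · exact hT.ancestor_iff.2 hcu
      · exact absurd ((hT.penultimate_rootPath hxc hanc).symm.trans
          (hT.penultimate_rootPath hub hu)) hx.1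
    · exact hT.ancestor_trans hcb hb

theorem ancestor_penultimate_of_isPath (hT : T.IsTree) {z a b : V} {p : T.Walk a b}
    (hp : p.IsPath) (hnil : ¬p.Nil) (hb : Ancestor T z b p.penultimate) :
    Ancestor T z p.penultimate a := by
  have hadj := p.adj_penultimate hnil
  obtain ⟨hpath, hnotMem⟩ := (concat_isPath_iff hadj).1 ((concat_dropLast hadj).symm ▸ hp)
  exact hT.ancestor_of_isPath_of_parent_notMem p.dropLast hpath hnotMem hadj.symm hb

/-- The path from `y` up to a strict ancestor `x` starts with the parent of `y` and ends with
the child of `x` that is an ancestor of `y`. -/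
theorem exists_isPath_to_ancestor (hT : T.IsTree) {z x y : V} (hxy : Ancestor T z x y)
    (hne : x ≠ y) :
    ∃ p : T.Walk y x, p.IsPath ∧ 1 ≤ p.length ∧
      p.snd = (hT.rootPath z y).getVert (hT.depth z y - 1) ∧
      p.penultimate = (hT.rootPath z y).getVert (hT.depth z x + 1) := by
  obtain ⟨i, rfl, hi⟩ := mem_support_iff_exists_getVert.1 (hT.ancestor_iff.1 hxy)
  have hlt : i < hT.depth z y := lt_of_le_of_ne hi fun h => hne (h ▸ getVert_length _)
  refine ⟨((hT.rootPath z y).drop i).reverse, ((hT.isPath_rootPath z y).drop i).reverse,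
    ?_, ?_, ?_⟩
  · rw [length_reverse, drop_length]
    exact Nat.sub_pos_of_lt hlt
  · rw [snd_reverse, penultimate, drop_length, drop_getVert]
    congr 1
    rw [depth] at hlt ⊢
    omega
  · rw [penultimate_reverse, snd, drop_getVert, hT.depth_getVert z y hi]

end SimpleGraph.IsTree

namespace Request

theorem not_nil (r : Request T) : ¬r.toWalk.Nil :=
  not_nil_iff_lt_length.2 r.one_le_length

theorem adj_s_sPlus (r : Request T) : T.Adj r.s r.sPlus :=
  r.toWalk.adj_snd r.not_nil

theorem adj_tMinus_t (r : Request T) : T.Adj r.tMinus r.t :=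
  r.toWalk.adj_penultimate r.not_nil

def reverse (r : Request T) : Request T where
  s := r.t
  t := r.s
  toWalk := r.toWalk.reverse
  isPath := r.isPath.reverse
  one_le_length := r.toWalk.length_reverse ▸ r.one_le_length

@[simp]
theorem reverse_reverse (r : Request T) : r.reverse.reverse = r := by
  cases r
  simp [reverse]

theorem sPlus_reverse (r : Request T) : r.reverse.sPlus = r.tMinus :=
  r.toWalk.snd_reverse

theorem tMinus_reverse (r : Request T) : r.reverse.tMinus = r.sPlus :=
  r.toWalk.penultimate_reverse

end Request

theorem InterferesOn.reverse {r r' : Request T} (h : InterferesOn T r r') :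
    InterferesOn T r'.reverse r.reverse := by
  obtain ⟨p, hp, hlen, hsnd, hpen⟩ := h
  refine ⟨p.reverse, hp.reverse, p.length_reverse ▸ hlen, ?_, ?_⟩
  · rw [Request.sPlus_reverse, ← hpen]
    exact p.snd_reverse
  · rw [Request.tMinus_reverse, ← hsnd]
    exact p.penultimate_reverse

theorem interferesOn_reverse_iff {r r' : Request T} :
    InterferesOn T r'.reverse r.reverse ↔ InterferesOn T r r' :=
  ⟨fun h => by simpa using h.reverse, InterferesOn.reverse⟩

theorem interfere_reverse_iff {r r' : Request T} :
    Interfere T r.reverse r'.reverse ↔ Interfere T r r' := by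
  rw [Interfere, Interfere, interferesOn_reverse_iff, interferesOn_reverse_iff, or_comm]

theorem Diverging.converging_reverse {z : V} {r : Request T} (hr : Diverging T z r) :
    Converging T z r.reverse := by
  intro i hi
  have hi' : i < r.toWalk.length := r.toWalk.length_reverse ▸ hi
  have h := hr (r.toWalk.length - (i + 1)) (by omega)
  simp only [Request.reverse, getVert_reverse]
  rwa [show r.toWalk.length - i = r.toWalk.length - (i + 1) + 1 by omega]

theorem Converging.ancestor_getVert (hT : T.IsTree) {z : V} {r : Request T}
    (hr : Converging T z r) {i j : ℕ} (hij : i ≤ j) :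
    Ancestor T z (r.toWalk.getVert j) (r.toWalk.getVert i) := by
  induction j, hij using Nat.le_induction with
  | base => exact hT.ancestor_refl z _
  | succ k _ ih =>
    refine hT.ancestor_trans ?_ ih
    by_cases hk : k < r.toWalk.length
    · exact hr k hk
    · rw [getVert_of_length_le _ (by omega), getVert_of_length_le _ (by omega)]
      exact hT.ancestor_refl z _

theorem Converging.ancestor_sPlus (hT : T.IsTree) {z : V} {r : Request T}
    (hr : Converging T z r) : Ancestor T z r.sPlus r.s := by
  have h := hr.ancestor_getVert hT zero_le_one
  rwa [getVert_zero] at h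

theorem Converging.ancestor_tMinus (hT : T.IsTree) {z : V} {r : Request T}
    (hr : Converging T z r) : Ancestor T z r.tMinus r.s := by
  have h := hr.ancestor_getVert hT (Nat.zero_le (r.toWalk.length - 1))
  rwa [getVert_zero] at h

theorem Converging.ancestor_t_tMinus {z : V} {r : Request T} (hr : Converging T z r) :
    Ancestor T z r.t r.tMinus := by
  have h := hr (r.toWalk.length - 1) (by have := r.one_le_length; omega)
  rwa [Nat.sub_add_cancel r.one_le_length, getVert_length] at h

theorem ancestor_tMinus_of_interferesOn (hT : T.IsTree) {z : V} {r r' : Request T}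
    (hr' : Converging T z r') (h : InterferesOn T r r') : Ancestor T z r'.tMinus r.s := by
  obtain ⟨p, hp, hlen, -, hpen⟩ := h
  change p.penultimate = r'.tMinus at hpen
  rw [← hpen]
  exact hT.ancestor_penultimate_of_isPath hp (not_nil_iff_lt_length.2 hlen)
    (hpen ▸ hr'.ancestor_t_tMinus)

theorem interferesOn_of_ancestor_tMinus (hT : T.IsTree) {z : V} {r r' : Request T}
    (hr : Converging T z r) (hr' : Converging T z r')
    (h : Ancestor T z r'.tMinus r.tMinus) : InterferesOn T r r' := by
  have hs : Ancestor T z r'.tMinus r.s := hT.ancestor_trans h (hr.ancestor_tMinus hT)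
  have ht : Ancestor T z r'.t r.s := hT.ancestor_trans hr'.ancestor_t_tMinus hs
  have hne : r'.t ≠ r.s := fun heq =>
    r'.adj_tMinus_t.ne (hT.ancestor_antisymm (heq ▸ hs) hr'.ancestor_t_tMinus)
  obtain ⟨p, hp, hlen, hsnd, hpen⟩ := hT.exists_isPath_to_ancestor ht hne
  refine ⟨p, hp, hlen, hsnd.trans (hT.penultimate_rootPath r.adj_s_sPlus.symm
    (hr.ancestor_sPlus hT)), ?_⟩
  change p.penultimate = r'.tMinus
  rw [hpen, ← hT.depth_eq_succ_of_ancestor r'.adj_tMinus_t.symm hr'.ancestor_t_tMinus]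
  exact (hT.ancestor_iff_depth.1 hs).2

theorem interfere_iff_related_tMinus (hT : T.IsTree) {z : V} {r r' : Request T}
    (hr : Converging T z r) (hr' : Converging T z r') :
    Interfere T r r' ↔ Related T z r.tMinus r'.tMinus := by
  constructor
  · rintro (h | h)
    · exact hT.related_of_ancestor_of_ancestor (hr.ancestor_tMinus hT)
        (ancestor_tMinus_of_interferesOn hT hr' h)
    · exact hT.related_of_ancestor_of_ancestor (ancestor_tMinus_of_interferesOn hT hr h)
        (hr'.ancestor_tMinus hT)
  · rintro (h | h)
    · exact Or.inr (interferesOn_of_ancestor_tMinus hT hr' hr h)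
    · exact Or.inl (interferesOn_of_ancestor_tMinus hT hr hr' h)

theorem interfere_iff_related_sPlus (hT : T.IsTree) {z : V} {r r' : Request T}
    (hr : Diverging T z r) (hr' : Diverging T z r') :
    Interfere T r r' ↔ Related T z r.sPlus r'.sPlus := by
  rw [← interfere_reverse_iff, ← r.tMinus_reverse, ← r'.tMinus_reverse]
  exact interfere_iff_related_tMinus hT hr.converging_reverse hr'.converging_reverse

/-- Order the vertices first by their key, breaking ties by an arbitrary linear order. -/
theorem isComparabilityGraph_of_adj_iff {α β : Type*} {G : SimpleGraph α} {le : β → β → Prop}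
    [IsPartialOrder β le] (key : α → β)
    (hG : ∀ a b, G.Adj a b ↔ a ≠ b ∧ (le (key a) (key b) ∨ le (key b) (key a))) :
    IsComparabilityGraph G := by
  let _ : LinearOrder α := IsWellOrder.linearOrder WellOrderingRel
  refine ⟨fun a b => le (key a) (key b) ∧ (key a = key b → a ≤ b),
    { refl := ?_, trans := ?_, antisymm := ?_ }, fun a b => (hG a b).trans ?_⟩
  · exact fun a => ⟨refl _, fun _ => le_rfl⟩
  · rintro a b c ⟨hab, hab'⟩ ⟨hbc, hbc'⟩
    refine ⟨_root_.trans hab hbc, fun hac => ?_⟩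
    have hkey : key a = key b := antisymm hab (hac ▸ hbc)
    exact (hab' hkey).trans (hbc' (hkey ▸ hac))
  · rintro a b ⟨hab, hab'⟩ ⟨hba, hba'⟩
    have hkey := antisymm hab hba
    exact le_antisymm (hab' hkey) (hba' hkey.symm)
  · refine and_congr_right fun _ => ⟨fun h => ?_, Or.imp And.left And.left⟩
    by_cases hkey : key a = key b
    · have hle : le (key a) (key b) := hkey ▸ refl _
      rcases le_total a b with hab | hba
      · exact Or.inl ⟨hle, fun _ => hab⟩
      · exact Or.inr ⟨hkey ▸ hle, fun _ => hba⟩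
    · exact h.imp (fun h => ⟨h, fun h' => absurd h' hkey⟩)
        (fun h => ⟨h, fun h' => absurd h'.symm hkey⟩)

theorem isComparabilityGraph_interGraph (hT : T.IsTree) (z : V) {S : Set (Request T)}
    (key : Request T → V)
    (hkey : ∀ r ∈ S, ∀ r' ∈ S, Interfere T r r' ↔ Related T z (key r) (key r')) :
    IsComparabilityGraph (interGraph T S) :=
  have := hT.isPartialOrder_ancestor z
  isComparabilityGraph_of_adj_iff (fun r : S => key r) fun a b =>
    and_congr_right' (hkey a a.2 b b.2)

/-- Corollary 4(i)-(ii): the interference graphs of the converging requests and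
of the diverging requests of `R` are comparability graphs. -/
theorem conv_div_comparability {V : Type*} (T : SimpleGraph V) (hT : T.IsTree)
    (z : V) (R : Set (Request T)) :
    IsComparabilityGraph (interGraph T {r ∈ R | Converging T z r}) ∧
    IsComparabilityGraph (interGraph T {r ∈ R | Diverging T z r}) :=
  ⟨isComparabilityGraph_interGraph hT z Request.tMinus fun _ hr _ hr' =>
      interfere_iff_related_tMinus hT hr.2 hr'.2,
    isComparabilityGraph_interGraph hT z Request.sPlus fun _ hr _ hr' =>
      interfere_iff_related_sPlus hT hr.2 hr'.2⟩
end
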